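/- arXiv:1610.02603 — 4 statements merged into one kernel-verified Lean document; each statement's English description precedes it below -/
import Mathlib

section
/- The function K is infinitely differentiable on (0, ∞) and is completely monotone there: for every n ∈ ℕ and every x > 0, (−1)^n · (d^n K/dx^n)(x) ≥ 0. -/
noncomputable def K (x : ℝ) : ℝ :=
  if x = 0 then 0
  else 2 * Real.log (Real.cosh (Real.pi * |x| / 4) / Real.sinh (Real.pi * |x| / 4))

noncomputable def Kp (x : ℝ) : ℝ := ∑' k : ℤ, K (x + 2 * Real.pi * k)

def ProfileSolution (c : ℝ) (φ : ℝ → ℝ) : Prop :=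
  Continuous φ ∧ Function.Periodic φ (2 * Real.pi) ∧
    ∀ x : ℝ, (∫ y in (-Real.pi)..Real.pi, Kp (x - y) * φ y)
      = φ x * (c - φ x / 2) * (c - φ x)

namespace KCM

open Real Filter Set

noncomputable def Sh (x : ℝ) : ℝ := Real.sinh (Real.pi * x / 2)
noncomputable def Ch (x : ℝ) : ℝ := Real.cosh (Real.pi * x / 2)

lemma Sh_pos {x : ℝ} (hx : 0 < x) : 0 < Sh x :=
  Real.sinh_pos_iff.mpr (by positivity)

lemma Ch_pos (x : ℝ) : 0 < Ch x := Real.cosh_pos _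

lemma hasDerivAt_lin (x : ℝ) : HasDerivAt (fun y : ℝ => Real.pi * y / 2) (Real.pi / 2) x := by
  simpa using ((hasDerivAt_id x).const_mul Real.pi).div_const 2

lemma hasDerivAt_Sh (x : ℝ) : HasDerivAt Sh (Ch x * (Real.pi / 2)) x :=
  (Real.hasDerivAt_sinh _).comp x (hasDerivAt_lin x)

lemma hasDerivAt_Ch (x : ℝ) : HasDerivAt Ch (Sh x * (Real.pi / 2)) x :=
  (Real.hasDerivAt_cosh _).comp x (hasDerivAt_lin x)

lemma Ch_sq (x : ℝ) : Ch x ^ 2 = Sh x ^ 2 + 1 := Real.cosh_sq _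

inductive Fam : (ℝ → ℝ) → Prop
  | A (p : ℕ) : Fam (fun x => 1 / Sh x ^ p)
  | B (p : ℕ) : Fam (fun x => Ch x / Sh x ^ (p + 1))
  | add {g h : ℝ → ℝ} : Fam g → Fam h → Fam (fun x => g x + h x)
  | smul (a : ℝ) (ha : 0 ≤ a) {g : ℝ → ℝ} : Fam g → Fam (fun x => a * g x)

lemma Fam.nonneg {g} (hg : Fam g) : ∀ x, 0 < x → 0 ≤ g x := by
  induction hg with
  | A p =>
    intro x hx
    have hs := Sh_pos hx
    positivity
  | B p =>
    intro x hx
    have hs := Sh_pos hx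
    have hc := Ch_pos x
    positivity
  | add _ _ ih1 ih2 => exact fun x hx => add_nonneg (ih1 x hx) (ih2 x hx)
  | smul a ha _ ih => exact fun x hx => mul_nonneg ha (ih x hx)

lemma Fam.deriv_neg {g} (hg : Fam g) :
    ∃ h, Fam h ∧ ∀ x, 0 < x → HasDerivAt g (-(h x)) x := by
  induction hg with
  | A p =>
    refine ⟨fun x => Real.pi * p / 2 * (Ch x / Sh x ^ (p + 1)),
      Fam.smul _ (by positivity) (Fam.B p), fun x hx => ?_⟩
    have hs := Sh_pos hx
    have hpow : HasDerivAt (fun y => Sh y ^ p) _ x := (hasDerivAt_Sh x).pow p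
    have hinv := hpow.inv (pow_ne_zero p hs.ne')
    have : HasDerivAt (fun y => 1 / Sh y ^ p)
        (-((p : ℝ) * Sh x ^ (p - 1) * (Ch x * (Real.pi / 2))) / (Sh x ^ p) ^ 2) x := by
      simp only [one_div]
      exact hinv
    convert this using 1
    cases p with
    | zero => simp
    | succ q =>
      push_cast
      field_simp
      ring
  | B p =>
    refine ⟨fun x => Real.pi * p / 2 * (1 / Sh x ^ p)
        + Real.pi * (p + 1) / 2 * (1 / Sh x ^ (p + 2)),
      Fam.add (Fam.smul _ (by positivity) (Fam.A p))
        (Fam.smul _ (by positivity) (Fam.A (p + 2))), fun x hx => ?_⟩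
    have hs := Sh_pos hx
    have hpow : HasDerivAt (fun y => Sh y ^ (p + 1)) _ x := (hasDerivAt_Sh x).pow (p + 1)
    have hdiv := (hasDerivAt_Ch x).div hpow (pow_ne_zero (p + 1) hs.ne')
    refine hdiv.congr_deriv (Eq.symm ?_)
    have hc : Ch x ^ 2 = Sh x ^ 2 + 1 := Ch_sq x
    push_cast
    field_simp
    ring_nf
    linear_combination (Sh x ^ p * Sh x ^ (p + 2) * Sh x ^ p * ((p : ℝ) + 1)) * hc
  | add _ _ ih1 ih2 =>
    obtain ⟨h1, hf1, hd1⟩ := ih1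
    obtain ⟨h2, hf2, hd2⟩ := ih2
    refine ⟨fun x => h1 x + h2 x, Fam.add hf1 hf2, fun x hx => ?_⟩
    have := (hd1 x hx).add (hd2 x hx)
    refine this.congr_deriv (Eq.symm ?_)
    ring
  | smul a ha _ ih =>
    obtain ⟨h, hf, hd⟩ := ih
    exact ⟨fun x => a * h x, Fam.smul a ha hf, fun x hx => by
      simpa [mul_comm, mul_neg] using (hd x hx).const_mul a⟩

lemma iter_congr {f g : ℝ → ℝ} {x : ℝ} (n : ℕ) (h : f =ᶠ[nhds x] g) :
    iteratedDeriv n f x = iteratedDeriv n g x := by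
  induction n generalizing f g with
  | zero => simpa using h.self_of_nhds
  | succ n ih =>
    rw [iteratedDeriv_succ', iteratedDeriv_succ']
    exact ih h.deriv

lemma fam_iter (n : ℕ) :
    ∀ g, Fam g → ∃ h, Fam h ∧ ∀ x, 0 < x → iteratedDeriv n g x = (-1 : ℝ) ^ n * h x := by
  induction n with
  | zero => exact fun g hg => ⟨g, hg, fun x hx => by simp⟩
  | succ n ih =>
    intro g hg
    obtain ⟨g₁, hg₁, hd⟩ := hg.deriv_neg
    obtain ⟨h, hh, hval⟩ := ih g₁ hg₁
    refine ⟨h, hh, fun x hx => ?_⟩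
    have hev : deriv g =ᶠ[nhds x] (fun y => -g₁ y) := by
      filter_upwards [IsOpen.mem_nhds isOpen_Ioi hx] with y hy
      exact (hd y hy).deriv
    rw [iteratedDeriv_succ', iter_congr n hev]
    have hneg : iteratedDeriv n (fun y => -g₁ y) x = -iteratedDeriv n g₁ x := by
      exact iteratedDeriv_neg n g₁ x
    rw [hneg, hval x hx]
    ring

noncomputable def G (x : ℝ) : ℝ :=
  2 * Real.log (Real.cosh (Real.pi * x / 4)) - 2 * Real.log (Real.sinh (Real.pi * x / 4))

lemma K_eq_G {x : ℝ} (hx : 0 < x) : K x = G x := by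
  have ht : 0 < Real.pi * x / 4 := by positivity
  have hs : 0 < Real.sinh (Real.pi * x / 4) := Real.sinh_pos_iff.mpr ht
  have hc : 0 < Real.cosh (Real.pi * x / 4) := Real.cosh_pos _
  rw [K, if_neg hx.ne', abs_of_pos hx, G, Real.log_div hc.ne' hs.ne']
  ring

lemma K_ev {x : ℝ} (hx : 0 < x) : K =ᶠ[nhds x] G := by
  filter_upwards [IsOpen.mem_nhds isOpen_Ioi hx] with y hy
  exact K_eq_G hy

lemma hasDerivAt_K {x : ℝ} (hx : 0 < x) :
    HasDerivAt K (-(Real.pi * (1 / Sh x ^ 1))) x := by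
  have ht : 0 < Real.pi * x / 4 := by positivity
  have hs : 0 < Real.sinh (Real.pi * x / 4) := Real.sinh_pos_iff.mpr ht
  have hc : 0 < Real.cosh (Real.pi * x / 4) := Real.cosh_pos _
  have hlin : HasDerivAt (fun y : ℝ => Real.pi * y / 4) (Real.pi / 4) x := by
    simpa using ((hasDerivAt_id x).const_mul Real.pi).div_const 4
  have hcosh : HasDerivAt (fun y : ℝ => Real.cosh (Real.pi * y / 4))
      (Real.sinh (Real.pi * x / 4) * (Real.pi / 4)) x :=
    (Real.hasDerivAt_cosh _).comp x hlin
  have hsinh : HasDerivAt (fun y : ℝ => Real.sinh (Real.pi * y / 4))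
      (Real.cosh (Real.pi * x / 4) * (Real.pi / 4)) x :=
    (Real.hasDerivAt_sinh _).comp x hlin
  have hlogc : HasDerivAt (fun y : ℝ => Real.log (Real.cosh (Real.pi * y / 4)))
      ((Real.cosh (Real.pi * x / 4))⁻¹ * (Real.sinh (Real.pi * x / 4) * (Real.pi / 4))) x :=
    HasDerivAt.comp (h₂ := Real.log) x (Real.hasDerivAt_log hc.ne') hcosh
  have hlogs : HasDerivAt (fun y : ℝ => Real.log (Real.sinh (Real.pi * y / 4)))
      ((Real.sinh (Real.pi * x / 4))⁻¹ * (Real.cosh (Real.pi * x / 4) * (Real.pi / 4))) x :=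
    HasDerivAt.comp (h₂ := Real.log) x (Real.hasDerivAt_log hs.ne') hsinh
  have hG : HasDerivAt G
      (2 * ((Real.cosh (Real.pi * x / 4))⁻¹ * (Real.sinh (Real.pi * x / 4) * (Real.pi / 4)))
        - 2 * ((Real.sinh (Real.pi * x / 4))⁻¹ * (Real.cosh (Real.pi * x / 4) * (Real.pi / 4)))) x :=
    (hlogc.const_mul 2).sub (hlogs.const_mul 2)
  have hK := hG.congr_of_eventuallyEq (K_ev hx)
  refine hK.congr_deriv (Eq.symm ?_)
  have h2 : Sh x = 2 * Real.sinh (Real.pi * x / 4) * Real.cosh (Real.pi * x / 4) := by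
    rw [Sh, show Real.pi * x / 2 = 2 * (Real.pi * x / 4) by ring, Real.sinh_two_mul]
  have hsq : Real.cosh (Real.pi * x / 4) ^ 2 = Real.sinh (Real.pi * x / 4) ^ 2 + 1 :=
    Real.cosh_sq _
  rw [h2]
  field_simp
  linear_combination 4 * hsq

lemma K_nonneg {x : ℝ} (hx : 0 < x) : 0 ≤ K x := by
  have ht : 0 < Real.pi * x / 4 := by positivity
  have hs : 0 < Real.sinh (Real.pi * x / 4) := Real.sinh_pos_iff.mpr ht
  have hle : Real.sinh (Real.pi * x / 4) ≤ Real.cosh (Real.pi * x / 4) := by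
    nlinarith [Real.cosh_sub_sinh (Real.pi * x / 4), Real.exp_pos (-(Real.pi * x / 4))]
  rw [K, if_neg hx.ne', abs_of_pos hx]
  have : (1 : ℝ) ≤ Real.cosh (Real.pi * x / 4) / Real.sinh (Real.pi * x / 4) :=
    (one_le_div hs).mpr hle
  have := Real.log_nonneg this
  linarith

end KCM

open KCM Set in
theorem K_completely_monotone :
    ContDiffOn ℝ (⊤ : ℕ∞) K (Set.Ioi (0 : ℝ)) ∧
    ∀ (n : ℕ) (x : ℝ), 0 < x → 0 ≤ (-1 : ℝ) ^ n * iteratedDeriv n K x := by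
  constructor
  · have hG : ContDiffOn ℝ (⊤ : ℕ∞) G (Set.Ioi (0 : ℝ)) := by
      intro x hx
      have hx' : (0 : ℝ) < x := hx
      have ht : 0 < Real.pi * x / 4 := by positivity
      have hs : 0 < Real.sinh (Real.pi * x / 4) := Real.sinh_pos_iff.mpr ht
      have hc : 0 < Real.cosh (Real.pi * x / 4) := Real.cosh_pos _
      have hlin : ContDiffAt ℝ (⊤ : ℕ∞) (fun y : ℝ => Real.pi * y / 4) x :=
        ((contDiff_const.mul contDiff_id).div_const 4).contDiffAt
      have hcosh : ContDiffAt ℝ (⊤ : ℕ∞) (fun y : ℝ => Real.cosh (Real.pi * y / 4)) x :=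
        Real.contDiff_cosh.contDiffAt.comp x hlin
      have hsinh : ContDiffAt ℝ (⊤ : ℕ∞) (fun y : ℝ => Real.sinh (Real.pi * y / 4)) x :=
        Real.contDiff_sinh.contDiffAt.comp x hlin
      have h1 : ContDiffAt ℝ (⊤ : ℕ∞) (fun y : ℝ => Real.log (Real.cosh (Real.pi * y / 4))) x :=
        ContDiffAt.comp (g := Real.log) x (Real.contDiffAt_log.mpr hc.ne') hcosh
      have h2 : ContDiffAt ℝ (⊤ : ℕ∞) (fun y : ℝ => Real.log (Real.sinh (Real.pi * y / 4))) x :=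
        ContDiffAt.comp (g := Real.log) x (Real.contDiffAt_log.mpr hs.ne') hsinh
      exact ((contDiffAt_const.mul h1).sub (contDiffAt_const.mul h2)).contDiffWithinAt
    exact hG.congr fun y hy => K_eq_G hy
  · intro n x hx
    cases n with
    | zero => simpa using K_nonneg hx
    | succ m =>
      have hfam : Fam (fun y => Real.pi * (1 / Sh y ^ 1)) :=
        Fam.smul Real.pi Real.pi_pos.le (Fam.A 1)
      obtain ⟨h, hh, hval⟩ := fam_iter m _ hfam
      have hev : deriv K =ᶠ[nhds x] (fun y => -(Real.pi * (1 / Sh y ^ 1))) := by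
        filter_upwards [IsOpen.mem_nhds isOpen_Ioi hx] with y hy
        exact (hasDerivAt_K hy).deriv
      have : iteratedDeriv (m + 1) K x = (-1 : ℝ) ^ (m + 1) * h x := by
        rw [iteratedDeriv_succ', iter_congr m hev]
        have hneg : iteratedDeriv m (fun y => -(Real.pi * (1 / Sh y ^ 1))) x
            = -iteratedDeriv m (fun y => Real.pi * (1 / Sh y ^ 1)) x := by
          exact iteratedDeriv_neg m (fun y => Real.pi * (1 / Sh y ^ 1)) x
        rw [hneg, hval x hx]
        ring
      rw [this]
      have := hh.nonneg x hx
      have hsq : ((-1 : ℝ) ^ (m + 1)) * ((-1 : ℝ) ^ (m + 1)) = 1 := by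
        rw [← pow_add]
        exact (neg_one_pow_eq_one_iff_even (by norm_num)).mpr ⟨m + 1, by ring⟩
      calc (0:ℝ) ≤ h x := this
        _ = (-1 : ℝ) ^ (m+1) * ((-1 : ℝ) ^ (m+1) * h x) := by rw [← mul_assoc, hsq, one_mul]
end

section
/- For every s₀ ∈ (0, π/2) and every n ∈ ℕ there exists a constant C > 0 such that |(d^n K/dx^n)(x)| ≤ C·exp(−s₀·x) for all x ≥ 1. -/
/-!
For `x > 0` one has `K' x = -π / sinh (π x / 2)`, and differentiating `P (coth u) / sinh u` for a
polynomial `P` gives `Q (coth u) / sinh u` with `Q = P' (1 - X²) - X P`, since `coth' = 1 - coth²`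
and `(1 / sinh)' = -coth / sinh`. So every derivative of `K` of order `≥ 1` has this shape. For
`u ≥ π / 2`, `coth u` stays in a compact interval and `1 / sinh u ≤ C e^{-u}`, which gives decay
at rate `π / 2 > s₀`. For `K` itself, `log (coth t) ≤ coth t - 1 = e^{-t} / sinh t`.
-/

open Real Polynomial

lemma exp_mul_le_sinh {u₀ u : ℝ} (hu : u₀ ≤ u) :
    (1 - exp (-2 * u₀)) / 2 * exp u ≤ sinh u := by
  have : exp (-u) ≤ exp (-2 * u₀) * exp u := by
    rw [← exp_add]
    exact exp_le_exp.mpr (by linarith)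
  rw [sinh_eq]
  linarith

lemma one_sub_exp_neg_two_mul_div_two_pos {u₀ : ℝ} (hu₀ : 0 < u₀) :
    0 < (1 - exp (-2 * u₀)) / 2 := by
  have : exp (-2 * u₀) < 1 := exp_lt_one_iff.mpr (by linarith)
  linarith

lemma inv_sinh_le {u₀ u : ℝ} (hu₀ : 0 < u₀) (hu : u₀ ≤ u) :
    (sinh u)⁻¹ ≤ ((1 - exp (-2 * u₀)) / 2)⁻¹ * exp (-u) := by
  have hd := one_sub_exp_neg_two_mul_div_two_pos hu₀
  calc (sinh u)⁻¹ ≤ ((1 - exp (-2 * u₀)) / 2 * exp u)⁻¹ :=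
        inv_anti₀ (by positivity) (exp_mul_le_sinh hu)
    _ = ((1 - exp (-2 * u₀)) / 2)⁻¹ * exp (-u) := by rw [mul_inv, exp_neg]

lemma cosh_div_sinh_le {u₀ u : ℝ} (hu₀ : 0 < u₀) (hu : u₀ ≤ u) :
    cosh u / sinh u ≤ ((1 - exp (-2 * u₀)) / 2)⁻¹ := by
  have hd := one_sub_exp_neg_two_mul_div_two_pos hu₀
  have hcosh : cosh u ≤ exp u := by
    have := exp_le_exp.mpr (show -u ≤ u by linarith)
    rw [cosh_eq]
    linarith
  calc cosh u / sinh u = cosh u * (sinh u)⁻¹ := div_eq_mul_inv _ _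
    _ ≤ exp u * (((1 - exp (-2 * u₀)) / 2)⁻¹ * exp (-u)) :=
        mul_le_mul hcosh (inv_sinh_le hu₀ hu)
          (inv_nonneg.mpr (sinh_pos_iff.mpr (by linarith)).le) (exp_pos u).le
    _ = ((1 - exp (-2 * u₀)) / 2)⁻¹ := by rw [exp_neg]; field_simp

lemma log_cosh_div_sinh_le {t₀ t : ℝ} (ht₀ : 0 < t₀) (ht : t₀ ≤ t) :
    log (cosh t / sinh t) ≤ ((1 - exp (-2 * t₀)) / 2)⁻¹ * exp (-2 * t) := by
  have hs : 0 < sinh t := sinh_pos_iff.mpr (by linarith)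
  calc log (cosh t / sinh t) ≤ cosh t / sinh t - 1 := log_le_sub_one_of_pos (by positivity)
    _ = exp (-t) * (sinh t)⁻¹ := by rw [← cosh_sub_sinh]; field_simp
    _ ≤ exp (-t) * (((1 - exp (-2 * t₀)) / 2)⁻¹ * exp (-t)) :=
        mul_le_mul_of_nonneg_left (inv_sinh_le ht₀ ht) (exp_pos _).le
    _ = ((1 - exp (-2 * t₀)) / 2)⁻¹ * exp (-2 * t) := by
        rw [show -2 * t = -t + -t by ring, exp_add]; ring

lemma log_cosh_div_sinh_nonneg {t : ℝ} (ht : 0 < t) : 0 ≤ log (cosh t / sinh t) :=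
  log_nonneg ((one_le_div (sinh_pos_iff.mpr ht)).mpr (sinh_lt_cosh t).le)

lemma exists_abs_eval_cosh_div_sinh_div_sinh_le (P : ℝ[X]) {u₀ : ℝ} (hu₀ : 0 < u₀) :
    ∃ C > 0, ∀ u, u₀ ≤ u → |P.eval (cosh u / sinh u) / sinh u| ≤ C * exp (-u) := by
  set B := ((1 - exp (-2 * u₀)) / 2)⁻¹
  have hB : 0 < B := inv_pos.mpr (one_sub_exp_neg_two_mul_div_two_pos hu₀)
  obtain ⟨M, hM⟩ := (isCompact_Icc (a := 0) (b := B)).exists_bound_of_continuousOn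
    P.continuous.continuousOn
  refine ⟨max M 1 * B, by positivity, fun u hu => ?_⟩
  have hs : 0 < sinh u := sinh_pos_iff.mpr (by linarith)
  have hcoth : cosh u / sinh u ∈ Set.Icc 0 B :=
    ⟨by have := cosh_pos u; positivity, cosh_div_sinh_le hu₀ hu⟩
  rw [abs_div, abs_of_pos hs, div_eq_mul_inv, mul_assoc]
  exact mul_le_mul ((hM _ hcoth).trans (le_max_left _ _)) (inv_sinh_le hu₀ hu)
    (inv_nonneg.mpr hs.le) (by positivity)

lemma hasDerivAt_cosh_div_sinh (a : ℝ) {x : ℝ} (hx : sinh (a * x) ≠ 0) :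
    HasDerivAt (fun x => cosh (a * x) / sinh (a * x)) (-a / sinh (a * x) ^ 2) x := by
  have hlin : HasDerivAt (fun x => a * x) a x := by simpa using (hasDerivAt_id x).const_mul a
  refine (hlin.cosh.div hlin.sinh hx).congr_deriv ?_
  field_simp
  linear_combination (-a) * cosh_sq (a * x)

lemma hasDerivAt_eval_cosh_div_sinh_div_sinh (P : ℝ[X]) (a : ℝ) {x : ℝ}
    (hx : sinh (a * x) ≠ 0) :
    HasDerivAt (fun x => P.eval (cosh (a * x) / sinh (a * x)) / sinh (a * x))
      ((C a * (derivative P * (1 - X ^ 2) - X * P)).eval (cosh (a * x) / sinh (a * x))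
        / sinh (a * x)) x := by
  have hlin : HasDerivAt (fun x => a * x) a x := by simpa using (hasDerivAt_id x).const_mul a
  refine (((P.hasDerivAt _).comp x (hasDerivAt_cosh_div_sinh a hx)).div hlin.sinh hx
    ).congr_deriv ?_
  simp only [Function.comp_apply, eval_mul, eval_C, eval_sub, eval_one, eval_pow, eval_X]
  field_simp
  linear_combination (a * eval (cosh (a * x) / sinh (a * x)) (derivative P)) * cosh_sq (a * x)

lemma K_eq_of_pos {x : ℝ} (hx : 0 < x) :
    K x = 2 * log (cosh (π / 4 * x) / sinh (π / 4 * x)) := by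
  rw [K, if_neg hx.ne', abs_of_pos hx, mul_div_right_comm]

lemma hasDerivAt_K {x : ℝ} (hx : 0 < x) : HasDerivAt K (-π / sinh (π / 2 * x)) x := by
  have hs : 0 < sinh (π / 4 * x) := sinh_pos_iff.mpr (by positivity)
  have hKeq : K =ᶠ[nhds x] fun y => 2 * log (cosh (π / 4 * y) / sinh (π / 4 * y)) := by
    filter_upwards [Ioi_mem_nhds hx] with y hy using K_eq_of_pos hy
  refine ((((hasDerivAt_cosh_div_sinh (π / 4) hs.ne').log
    (by have := cosh_pos (π / 4 * x); positivity)).const_mul 2).congr_of_eventuallyEq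
      hKeq).congr_deriv ?_
  rw [show π / 2 * x = 2 * (π / 4 * x) by ring, sinh_two_mul]
  have := cosh_pos (π / 4 * x)
  field_simp
  ring

lemma exists_iteratedDeriv_succ_K_eq (n : ℕ) : ∃ P : ℝ[X], ∀ x, 0 < x →
    iteratedDeriv (n + 1) K x =
      P.eval (cosh (π / 2 * x) / sinh (π / 2 * x)) / sinh (π / 2 * x) := by
  induction n with
  | zero =>
    refine ⟨C (-π), fun x hx => ?_⟩
    rw [iteratedDeriv_one, (hasDerivAt_K hx).deriv, eval_C]
  | succ n ih =>
    obtain ⟨P, hP⟩ := ih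
    refine ⟨C (π / 2) * (derivative P * (1 - X ^ 2) - X * P), fun x hx => ?_⟩
    have hEq : iteratedDeriv (n + 1) K =ᶠ[nhds x]
        fun y => P.eval (cosh (π / 2 * y) / sinh (π / 2 * y)) / sinh (π / 2 * y) := by
      filter_upwards [Ioi_mem_nhds hx] with y hy using hP y hy
    rw [iteratedDeriv_succ, hEq.deriv_eq]
    exact (hasDerivAt_eval_cosh_div_sinh_div_sinh P (π / 2)
      (sinh_pos_iff.mpr (by positivity)).ne').deriv

lemma K_iteratedDeriv_decay (n : ℕ) :
    ∃ C > 0, ∀ x, 1 ≤ x → |iteratedDeriv n K x| ≤ C * exp (-(π / 2) * x) := by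
  have hπ := pi_pos
  cases n with
  | zero =>
    refine ⟨2 * ((1 - exp (-2 * (π / 4))) / 2)⁻¹,
      by have := one_sub_exp_neg_two_mul_div_two_pos (by positivity : 0 < π / 4); positivity,
      fun x hx => ?_⟩
    have hx₀ : 0 < x := by linarith
    have ht : π / 4 ≤ π / 4 * x := by nlinarith
    have hlog := log_cosh_div_sinh_nonneg (by positivity : 0 < π / 4 * x)
    rw [iteratedDeriv_zero, K_eq_of_pos hx₀, abs_of_nonneg (by positivity),
      show -(π / 2) * x = -2 * (π / 4 * x) by ring, mul_assoc]
    gcongr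
    exact log_cosh_div_sinh_le (by positivity) ht
  | succ n =>
    obtain ⟨P, hP⟩ := exists_iteratedDeriv_succ_K_eq n
    obtain ⟨C, hC, hbound⟩ :=
      exists_abs_eval_cosh_div_sinh_div_sinh_le P (by positivity : 0 < π / 2)
    refine ⟨C, hC, fun x hx => ?_⟩
    rw [hP x (by linarith), neg_mul]
    exact hbound _ (by nlinarith)

theorem K_derivatives_exponential_decay :
    ∀ s₀ ∈ Set.Ioo (0 : ℝ) (Real.pi / 2), ∀ n : ℕ,
      ∃ C : ℝ, 0 < C ∧ ∀ x : ℝ, 1 ≤ x →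
        |iteratedDeriv n K x| ≤ C * Real.exp (-s₀ * x) := by
  intro s₀ hs₀ n
  obtain ⟨C, hC, hbound⟩ := K_iteratedDeriv_decay n
  refine ⟨C, hC, fun x hx => (hbound x hx).trans ?_⟩
  gcongr
  nlinarith [hs₀.2]
end

section
/- There exists an infinitely differentiable function K_reg : ℝ → ℝ such that K(x) = −2·log(π|x|/4) + K_reg(x) for all x ≠ 0, and moreover there exist constants C > 0 and δ > 0 such that |K_reg(x) − (π²/24)·x²| ≤ C·x⁴ for all |x| ≤ δ. -/
/-- The extension of `sinh t / t` by `1` at `0`. -/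
noncomputable def sdiv : ℝ → ℝ := dslope Real.sinh 0

lemma sdiv_ne {t : ℝ} (ht : t ≠ 0) : sdiv t = Real.sinh t / t := by
  rw [sdiv, dslope_of_ne _ ht, slope_def_field]
  simp [Real.sinh_zero]

lemma sdiv_zero : sdiv 0 = 1 := by
  rw [sdiv, dslope_same, Real.deriv_sinh, Real.cosh_zero]

lemma sdiv_neg (t : ℝ) : sdiv (-t) = sdiv t := by
  rcases eq_or_ne t 0 with h | h
  · simp [h]
  · rw [sdiv_ne (neg_ne_zero.2 h), sdiv_ne h, Real.sinh_neg, neg_div_neg_eq]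

lemma one_le_sdiv (t : ℝ) : 1 ≤ sdiv t := by
  have key : ∀ s : ℝ, 0 < s → 1 ≤ sdiv s := by
    intro s hs
    rw [sdiv_ne hs.ne', le_div_iff₀ hs, one_mul]
    exact Real.self_le_sinh_iff.2 hs.le
  rcases lt_trichotomy t 0 with h | h | h
  · rw [← sdiv_neg]; exact key _ (by linarith)
  · simp [h, sdiv_zero]
  · exact key _ h

lemma sdiv_pos (t : ℝ) : 0 < sdiv t := lt_of_lt_of_le one_pos (one_le_sdiv t)

lemma sdiv_abs {t : ℝ} (ht : t ≠ 0) : sdiv t = Real.sinh |t| / |t| := by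
  rcases abs_choice t with h | h
  · rw [h, sdiv_ne ht]
  · rw [h, ← sdiv_neg t, sdiv_ne (by simpa [neg_ne_zero] using ht)]

lemma analyticAt_rsinh (t : ℝ) : AnalyticAt ℝ Real.sinh t := by
  have h : Real.sinh = fun y : ℝ => (Real.exp y - Real.exp (-y)) / 2 :=
    funext fun y => Real.sinh_eq y
  rw [h]
  exact ((analyticAt_rexp.comp analyticAt_id).sub
    ((analyticAt_id.neg).rexp)).div analyticAt_const (by norm_num)

lemma analyticAt_rcosh (t : ℝ) : AnalyticAt ℝ Real.cosh t := by
  have h : Real.cosh = fun y : ℝ => (Real.exp y + Real.exp (-y)) / 2 :=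
    funext fun y => Real.cosh_eq y
  rw [h]
  exact ((analyticAt_rexp.comp analyticAt_id).add
    ((analyticAt_id.neg).rexp)).div analyticAt_const (by norm_num)

lemma analyticAt_sdiv (t : ℝ) : AnalyticAt ℝ sdiv t := by
  rcases eq_or_ne t 0 with h | h
  · subst h
    obtain ⟨p, hp⟩ := analyticAt_rsinh 0
    exact ⟨p.fslope, hp.has_fpower_series_dslope_fslope⟩
  · have h1 : AnalyticAt ℝ (fun y : ℝ => Real.sinh y / y) t :=
      (analyticAt_rsinh t).div analyticAt_id h
    apply h1.congr
    filter_upwards [eventually_ne_nhds h] with y hy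
    exact (sdiv_ne hy).symm

lemma analyticAt_rlog {x : ℝ} (hx : 0 < x) : AnalyticAt ℝ Real.log x := by
  have h1 : AnalyticAt ℝ (⇑Complex.reCLM ∘ Complex.log ∘ ⇑Complex.ofRealCLM) x :=
    (Complex.reCLM.analyticAt _).comp
      (((analyticAt_clog (Complex.ofReal_mem_slitPlane.2 hx)).restrictScalars).comp
        (Complex.ofRealCLM.analyticAt x))
  apply h1.congr
  exact Filter.Eventually.of_forall fun y => Complex.log_ofReal_re y

/-- The regular part of `K`. -/
noncomputable def Kreg (x : ℝ) : ℝ :=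
  2 * Real.log (Real.cosh (Real.pi * x / 4)) - 2 * Real.log (sdiv (Real.pi * x / 4))

lemma contDiff_Kreg : ContDiff ℝ (⊤ : ℕ∞) Kreg := by
  apply AnalyticOnNhd.contDiff
  intro x _
  have hlin : AnalyticAt ℝ (fun y : ℝ => Real.pi * y / 4) x :=
    (analyticAt_const.mul analyticAt_id).div analyticAt_const (by norm_num)
  have hc : AnalyticAt ℝ (fun y : ℝ => Real.cosh (Real.pi * y / 4)) x :=
    AnalyticAt.comp (g := Real.cosh) (f := fun y : ℝ => Real.pi * y / 4)
      (analyticAt_rcosh _) hlin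
  have hsd : AnalyticAt ℝ (fun y : ℝ => sdiv (Real.pi * y / 4)) x :=
    AnalyticAt.comp (g := sdiv) (f := fun y : ℝ => Real.pi * y / 4)
      (analyticAt_sdiv _) hlin
  have h1 : AnalyticAt ℝ (fun y : ℝ => Real.log (Real.cosh (Real.pi * y / 4))) x :=
    AnalyticAt.comp (g := Real.log) (f := fun y : ℝ => Real.cosh (Real.pi * y / 4))
      (analyticAt_rlog (Real.cosh_pos _)) hc
  have h2 : AnalyticAt ℝ (fun y : ℝ => Real.log (sdiv (Real.pi * y / 4))) x :=
    AnalyticAt.comp (g := Real.log) (f := fun y : ℝ => sdiv (Real.pi * y / 4))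
      (analyticAt_rlog (sdiv_pos _)) hsd
  exact (analyticAt_const.mul h1).sub (analyticAt_const.mul h2)

lemma K_eq_Kreg {x : ℝ} (hx : x ≠ 0) :
    K x = -2 * Real.log (Real.pi * |x| / 4) + Kreg x := by
  have hπ : (0:ℝ) < Real.pi := Real.pi_pos
  have hxa : 0 < |x| := abs_pos.2 hx
  set s : ℝ := Real.pi * |x| / 4 with hsdef
  have hs : 0 < s := by positivity
  have ht0 : Real.pi * x / 4 ≠ 0 := by
    apply div_ne_zero _ (by norm_num)
    exact mul_ne_zero hπ.ne' hx
  have habs : |Real.pi * x / 4| = s := by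
    rw [hsdef, abs_div, abs_mul, abs_of_nonneg hπ.le]
    norm_num
  have hcosh : Real.cosh (Real.pi * x / 4) = Real.cosh s := by
    rw [← Real.cosh_abs, habs]
  have hsdiv : sdiv (Real.pi * x / 4) = Real.sinh s / s := by
    rw [sdiv_abs ht0, habs]
  have hsinh : 0 < Real.sinh s := Real.sinh_pos_iff.2 hs
  have hcoshpos : 0 < Real.cosh s := Real.cosh_pos s
  rw [K, if_neg hx, Kreg, hcosh, hsdiv]
  rw [Real.log_div hcoshpos.ne' hsinh.ne', Real.log_div hsinh.ne' hs.ne']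
  ring

lemma log_one_add_est {a : ℝ} (ha : 0 ≤ a) : |Real.log (1 + a) - a| ≤ a ^ 2 := by
  have hpos : (0:ℝ) < 1 + a := by linarith
  have h1 : Real.log (1 + a) ≤ a := by
    have := Real.log_le_sub_one_of_pos hpos
    linarith
  have h2 : a - a ^ 2 ≤ Real.log (1 + a) := by
    have hinv : (0:ℝ) < (1 + a)⁻¹ := by positivity
    have h := Real.log_le_sub_one_of_pos hinv
    rw [Real.log_inv] at h
    have h3 : (1 + a)⁻¹ ≤ 1 - a + a ^ 2 := by
      rw [inv_eq_one_div, div_le_iff₀ hpos]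
      nlinarith
    nlinarith
  rw [abs_le]
  constructor <;> nlinarith

lemma exp_taylor5 {t : ℝ} (ht : |t| ≤ 1) :
    |Real.exp t - (1 + t + t ^ 2 / 2 + t ^ 3 / 6 + t ^ 4 / 24)| ≤ |t| ^ 5 / 100 := by
  have h1 := Real.exp_bound ht (n := 5) (by norm_num)
  have hs : ∑ m ∈ Finset.range 5, t ^ m / (Nat.factorial m : ℝ)
      = 1 + t + t ^ 2 / 2 + t ^ 3 / 6 + t ^ 4 / 24 := by
    simp [Finset.sum_range_succ, Nat.factorial]
  rw [hs] at h1
  refine h1.trans_eq ?_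
  norm_num [Nat.factorial]
  ring

lemma cosh_taylor {t : ℝ} (ht : |t| ≤ 1) :
    |Real.cosh t - (1 + t ^ 2 / 2 + t ^ 4 / 24)| ≤ |t| ^ 5 / 100 := by
  have hb1 := exp_taylor5 ht
  have hb2 := exp_taylor5 (t := -t) (by rwa [abs_neg])
  rw [abs_neg] at hb2
  set A : ℝ := Real.exp t - (1 + t + t ^ 2 / 2 + t ^ 3 / 6 + t ^ 4 / 24) with hA
  set B : ℝ := Real.exp (-t) - (1 + -t + (-t) ^ 2 / 2 + (-t) ^ 3 / 6 + (-t) ^ 4 / 24) with hB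
  have e : Real.cosh t - (1 + t ^ 2 / 2 + t ^ 4 / 24) = (A + B) / 2 := by
    rw [hA, hB, Real.cosh_eq]; ring
  rw [e]
  have htri : |A + B| ≤ |A| + |B| := abs_add_le A B
  rw [abs_div, abs_two]
  linarith

lemma sinh_taylor {t : ℝ} (ht : |t| ≤ 1) :
    |Real.sinh t - (t + t ^ 3 / 6)| ≤ |t| ^ 5 / 100 := by
  have hb1 := exp_taylor5 ht
  have hb2 := exp_taylor5 (t := -t) (by rwa [abs_neg])
  rw [abs_neg] at hb2
  set A : ℝ := Real.exp t - (1 + t + t ^ 2 / 2 + t ^ 3 / 6 + t ^ 4 / 24) with hA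
  set B : ℝ := Real.exp (-t) - (1 + -t + (-t) ^ 2 / 2 + (-t) ^ 3 / 6 + (-t) ^ 4 / 24) with hB
  have e : Real.sinh t - (t + t ^ 3 / 6) = (A - B) / 2 := by
    rw [hA, hB, Real.sinh_eq]; ring
  rw [e]
  have htri : |A - B| ≤ |A| + |B| := abs_sub A B
  rw [abs_div, abs_two]
  linarith

lemma log_cosh_est {t : ℝ} (ht : |t| ≤ 1) :
    |Real.log (Real.cosh t) - t ^ 2 / 2| ≤ 4 * t ^ 4 := by
  set a : ℝ := Real.cosh t - 1 with hadef
  have ha0 : 0 ≤ a := by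
    rw [hadef]; linarith [Real.one_le_cosh t]
  have hc := cosh_taylor ht
  have habs4 : |t| ^ 4 = t ^ 4 := by
    rw [← abs_pow, abs_of_nonneg (by positivity)]
  have ht5 : |t| ^ 5 ≤ t ^ 4 := by
    calc |t| ^ 5 ≤ |t| ^ 4 := pow_le_pow_of_le_one (abs_nonneg t) ht (by norm_num)
      _ = t ^ 4 := habs4
  have ht2 : t ^ 4 ≤ t ^ 2 := by
    have h2 : t ^ 2 ≤ 1 := by nlinarith [abs_nonneg t, sq_abs t]
    nlinarith [sq_nonneg t]
  have ha_est : |a - t ^ 2 / 2| ≤ t ^ 4 := by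
    rw [abs_le] at hc ⊢
    constructor <;> nlinarith [hc.1, hc.2]
  have haub : a ≤ t ^ 2 / 2 + t ^ 4 := by
    rw [abs_le] at ha_est; linarith [ha_est.2]
  have hasq : a ^ 2 ≤ 3 * t ^ 4 := by nlinarith
  have hlog := log_one_add_est ha0
  have hcosh : Real.cosh t = 1 + a := by rw [hadef]; ring
  rw [hcosh]
  rw [abs_le] at hlog ha_est ⊢
  constructor <;> nlinarith [hlog.1, hlog.2, ha_est.1, ha_est.2]

lemma log_sdiv_est {t : ℝ} (ht : |t| ≤ 1) (ht0 : t ≠ 0) :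
    |Real.log (sdiv t) - t ^ 2 / 6| ≤ 4 * t ^ 4 := by
  set b : ℝ := sdiv t - 1 with hbdef
  have hb0 : 0 ≤ b := by
    rw [hbdef]; linarith [one_le_sdiv t]
  have hs := sinh_taylor ht
  have habs4 : |t| ^ 4 = t ^ 4 := by
    rw [← abs_pow, abs_of_nonneg (by positivity)]
  have htpos : 0 < |t| := abs_pos.2 ht0
  have ht2 : t ^ 4 ≤ t ^ 2 := by
    have h2 : t ^ 2 ≤ 1 := by nlinarith [abs_nonneg t, sq_abs t]
    nlinarith [sq_nonneg t]
  have hb_est : |b - t ^ 2 / 6| ≤ t ^ 4 := by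
    have e : b - t ^ 2 / 6 = (Real.sinh t - (t + t ^ 3 / 6)) / t := by
      rw [hbdef, sdiv_ne ht0]
      field_simp
      ring
    rw [e, abs_div]
    rw [div_le_iff₀ htpos]
    calc |Real.sinh t - (t + t ^ 3 / 6)| ≤ |t| ^ 5 / 100 := hs
      _ ≤ t ^ 4 * |t| := by
          rw [← habs4]
          nlinarith [pow_nonneg (abs_nonneg t) 4, pow_nonneg (abs_nonneg t) 5]
  have hbub : b ≤ t ^ 2 / 6 + t ^ 4 := by
    rw [abs_le] at hb_est; linarith [hb_est.2]
  have hbsq : b ^ 2 ≤ 3 * t ^ 4 := by nlinarith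
  have hlog := log_one_add_est hb0
  have hsdiv : sdiv t = 1 + b := by rw [hbdef]; ring
  rw [hsdiv]
  rw [abs_le] at hlog hb_est ⊢
  constructor <;> nlinarith [hlog.1, hlog.2, hb_est.1, hb_est.2]

theorem K_log_decomposition :
    ∃ Kreg : ℝ → ℝ, ContDiff ℝ (⊤ : ℕ∞) Kreg ∧
      (∀ x : ℝ, x ≠ 0 → K x = -2 * Real.log (Real.pi * |x| / 4) + Kreg x) ∧
      ∃ C : ℝ, 0 < C ∧ ∃ δ : ℝ, 0 < δ ∧
        ∀ x : ℝ, |x| ≤ δ → |Kreg x - Real.pi ^ 2 / 24 * x ^ 2| ≤ C * x ^ 4 := by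
  refine ⟨Kreg, contDiff_Kreg, fun x hx => K_eq_Kreg hx, 16, by norm_num, 1, one_pos, ?_⟩
  intro x hx
  rcases eq_or_ne x 0 with h | h
  · subst h
    simp [Kreg, sdiv_zero, Real.cosh_zero, Real.log_one]
  · have hπ : (0:ℝ) < Real.pi := Real.pi_pos
    have hπ4 : Real.pi ≤ 4 := Real.pi_le_four
    set t : ℝ := Real.pi * x / 4 with htdef
    have ht0 : t ≠ 0 := by
      rw [htdef]
      exact div_ne_zero (mul_ne_zero hπ.ne' h) (by norm_num)
    have htabs : |t| = Real.pi * |x| / 4 := by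
      rw [htdef, abs_div, abs_mul, abs_of_nonneg hπ.le]
      norm_num
    have ht1 : |t| ≤ 1 := by
      rw [htabs]
      nlinarith [abs_nonneg x]
    have hA := log_cosh_est ht1
    have hB := log_sdiv_est ht1 ht0
    have hsq : t ^ 2 = Real.pi ^ 2 * x ^ 2 / 16 := by rw [htdef]; ring
    have hp2 : Real.pi ^ 2 ≤ 16 := by nlinarith
    have hp4 : Real.pi ^ 4 ≤ 256 := by nlinarith
    have hq : t ^ 4 = Real.pi ^ 4 * x ^ 4 / 256 := by rw [htdef]; ring
    have hx4 : 0 ≤ x ^ 4 := by positivity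
    have ht4x : t ^ 4 ≤ x ^ 4 := by
      rw [hq]
      nlinarith
    have hKreg : Kreg x = 2 * Real.log (Real.cosh t) - 2 * Real.log (sdiv t) := rfl
    rw [hKreg]
    rw [abs_le] at hA hB ⊢
    constructor <;> nlinarith [hA.1, hA.2, hB.1, hB.2, pow_nonneg (abs_nonneg t) 4]
end

section
/- The periodized kernel K_p is infinitely differentiable on (0, π) and completely monotone there: for every n ∈ ℕ and every x ∈ (0, π), (−1)^n · (d^n K_p/dx^n)(x) ≥ 0. -/
open Real

set_option maxHeartbeats 1000000

noncomputable def cc (m : ℕ) : ℝ := (2 * (m : ℝ) + 1) * (Real.pi / 2)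

lemma cc_pos (m : ℕ) : 0 < cc m := by
  have h : (0:ℝ) < 2 * (m:ℝ) + 1 := by positivity
  have := Real.pi_pos
  unfold cc; positivity

lemma cc_ge (m : ℕ) : Real.pi / 2 ≤ cc m := by
  unfold cc
  nlinarith [Real.pi_pos, Nat.cast_nonneg (α := ℝ) m]

lemma cc_le (m : ℕ) : cc m ≤ Real.pi * (m + 1) := by
  unfold cc
  nlinarith [Real.pi_pos, Nat.cast_nonneg (α := ℝ) m]

lemma sinh_cc_pos (m : ℕ) : 0 < Real.sinh (cc m * Real.pi) := by
  have := cc_pos m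
  have := Real.pi_pos
  exact Real.sinh_pos_iff.2 (by positivity)

noncomputable def Dg (n m : ℕ) (x : ℝ) : ℝ :=
  4 / (2 * (m : ℝ) + 1) / Real.sinh (cc m * Real.pi) *
    ((-cc m) ^ n *
      (if Even n then Real.cosh (cc m * (Real.pi - x)) else Real.sinh (cc m * (Real.pi - x))))

lemma hasDerivAt_Dg (n m : ℕ) (x : ℝ) : HasDerivAt (Dg n m) (Dg (n + 1) m x) x := by
  have h1 : HasDerivAt (fun x : ℝ => cc m * (Real.pi - x)) (-cc m) x := by
    simpa using ((hasDerivAt_const x Real.pi).sub (hasDerivAt_id x)).const_mul (cc m)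
  rcases Nat.even_or_odd n with he | ho
  · have hno : ¬ Even (n+1) := by simpa [Nat.even_add_one] using he
    have h2 := h1.cosh.const_mul (4 / (2 * (m : ℝ) + 1) / Real.sinh (cc m * Real.pi) * (-cc m) ^ n)
    have hf : Dg n m = fun y : ℝ => 4 / (2 * (m : ℝ) + 1) / Real.sinh (cc m * Real.pi) *
        (-cc m) ^ n * Real.cosh (cc m * (Real.pi - y)) := by
      funext y; simp only [Dg, if_pos he]; ring
    have hv : Dg (n+1) m x = 4 / (2 * (m : ℝ) + 1) / Real.sinh (cc m * Real.pi) * (-cc m) ^ n *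
        (Real.sinh (cc m * (Real.pi - x)) * -cc m) := by
      simp only [Dg, if_neg hno, pow_succ]; ring
    rw [hf, hv]; exact h2
  · have hne : ¬ Even n := by simpa using ho
    have hye : Even (n+1) := by simpa [Nat.even_add_one] using hne
    have h2 := h1.sinh.const_mul (4 / (2 * (m : ℝ) + 1) / Real.sinh (cc m * Real.pi) * (-cc m) ^ n)
    have hf : Dg n m = fun y : ℝ => 4 / (2 * (m : ℝ) + 1) / Real.sinh (cc m * Real.pi) *
        (-cc m) ^ n * Real.sinh (cc m * (Real.pi - y)) := by
      funext y; simp only [Dg, if_neg hne]; ring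
    have hv : Dg (n+1) m x = 4 / (2 * (m : ℝ) + 1) / Real.sinh (cc m * Real.pi) * (-cc m) ^ n *
        (Real.cosh (cc m * (Real.pi - x)) * -cc m) := by
      simp only [Dg, if_pos hye, pow_succ]; ring
    rw [hf, hv]; exact h2

lemma sinh_lower (m : ℕ) :
    (1 - Real.exp (-Real.pi ^ 2)) * Real.exp (cc m * Real.pi) / 2 ≤ Real.sinh (cc m * Real.pi) := by
  have hB : Real.pi ^ 2 / 2 ≤ cc m * Real.pi := by
    have := cc_ge m; nlinarith [Real.pi_pos]
  rw [Real.sinh_eq]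
  have h1 : Real.exp (-(cc m * Real.pi)) ≤ Real.exp (cc m * Real.pi) * Real.exp (-Real.pi ^ 2) := by
    rw [← Real.exp_add]
    apply Real.exp_le_exp.2
    nlinarith
  nlinarith [Real.exp_pos (cc m * Real.pi)]

lemma Dg_bound (n m : ℕ) {ε x : ℝ} (hε : 0 < ε) (hεπ : ε ≤ Real.pi) (hx : ε ≤ x)
    (hxπ : x ≤ Real.pi) :
    |Dg n m x| ≤ 8 / (1 - Real.exp (-Real.pi ^ 2)) * (cc m ^ n * Real.exp (-(cc m * ε))) := by
  have hc := cc_pos m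
  have hs := sinh_cc_pos m
  have h2m : (1:ℝ) ≤ 2 * (m:ℝ) + 1 := by have := Nat.cast_nonneg (α := ℝ) m; linarith
  have hq1 : Real.exp (-Real.pi ^ 2) < 1 :=
    Real.exp_lt_one_iff.2 (by nlinarith [Real.pi_pos])
  have hq0 : (0:ℝ) < 1 - Real.exp (-Real.pi ^ 2) := by linarith
  have hA : (0:ℝ) < 4 / (2 * (m:ℝ) + 1) / Real.sinh (cc m * Real.pi) := by positivity
  have habs : |Dg n m x| = 4 / (2 * (m : ℝ) + 1) / Real.sinh (cc m * Real.pi) *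
      (cc m ^ n * |if Even n then Real.cosh (cc m * (Real.pi - x))
        else Real.sinh (cc m * (Real.pi - x))|) := by
    rw [Dg, abs_mul, abs_mul, abs_pow, abs_neg, abs_of_pos hc, abs_of_pos hA]
  have hite : |if Even n then Real.cosh (cc m * (Real.pi - x))
      else Real.sinh (cc m * (Real.pi - x))| ≤ Real.exp (cc m * (Real.pi - ε)) := by
    have hch : Real.cosh (cc m * (Real.pi - x)) ≤ Real.exp (cc m * (Real.pi - ε)) := by
      have h1 : Real.cosh (cc m * (Real.pi - x)) ≤ Real.cosh (cc m * (Real.pi - ε)) := by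
        apply Real.cosh_le_cosh.2
        rw [abs_of_nonneg (by nlinarith), abs_of_nonneg (by nlinarith)]
        nlinarith
      refine h1.trans ?_
      rw [Real.cosh_eq]
      nlinarith [Real.exp_pos (-(cc m * (Real.pi - ε))), Real.exp_le_exp.2
        (show -(cc m * (Real.pi - ε)) ≤ cc m * (Real.pi - ε) by nlinarith)]
    split_ifs
    · rwa [abs_of_pos (Real.cosh_pos _)]
    · have ht : 0 ≤ cc m * (Real.pi - x) := by nlinarith
      rw [Real.abs_sinh, abs_of_nonneg ht]
      refine le_trans ?_ hch
      have h3 : Real.sinh (cc m * (Real.pi - x)) ≤ Real.cosh (cc m * (Real.pi - x)) := by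
        rw [Real.sinh_eq, Real.cosh_eq]
        nlinarith [Real.exp_pos (-(cc m * (Real.pi - x)))]
      exact h3
  calc |Dg n m x| ≤ 4 / (2 * (m : ℝ) + 1) / Real.sinh (cc m * Real.pi) *
      (cc m ^ n * Real.exp (cc m * (Real.pi - ε))) := by
        rw [habs]; gcongr
    _ ≤ 4 / 1 / ((1 - Real.exp (-Real.pi ^ 2)) * Real.exp (cc m * Real.pi) / 2) *
      (cc m ^ n * Real.exp (cc m * (Real.pi - ε))) := by
        gcongr <;> first | positivity | exact sinh_lower m | exact h2m
    _ = 8 / (1 - Real.exp (-Real.pi ^ 2)) * (cc m ^ n * Real.exp (-(cc m * ε))) := by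
        have he : Real.exp (cc m * (Real.pi - ε)) =
            Real.exp (cc m * Real.pi) * Real.exp (-(cc m * ε)) := by
          rw [← Real.exp_add]; ring_nf
        rw [he]
        field_simp
        ring

lemma summable_bound (n : ℕ) {ε : ℝ} (hε : 0 < ε) :
    Summable (fun m => cc m ^ n * Real.exp (-(cc m * ε))) := by
  set ρ := Real.exp (-(Real.pi * ε)) with hρ
  have hρ0 : 0 < ρ := Real.exp_pos _
  have hρ1 : ρ < 1 := Real.exp_lt_one_iff.2 (by nlinarith [Real.pi_pos])
  have hsum : Summable (fun m : ℕ => ((m:ℝ) + 1) ^ n * ρ ^ m) := by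
    have h1 : Summable (fun j : ℕ => (j:ℝ) ^ n * ρ ^ j) :=
      summable_pow_mul_geometric_of_norm_lt_one n (by rwa [Real.norm_eq_abs, abs_of_pos hρ0])
    have h2 := (summable_nat_add_iff 1).2 h1
    have h3 := h2.mul_left ρ⁻¹
    refine h3.congr fun m => ?_
    push_cast
    field_simp
    ring
  apply Summable.of_nonneg_of_le (fun m => mul_nonneg (pow_nonneg (cc_pos m).le n) (Real.exp_pos _).le)
    (fun m => ?_) (hsum.mul_left (Real.pi ^ n * Real.exp (-(Real.pi / 2 * ε))))
  have h1 : cc m ^ n ≤ Real.pi ^ n * ((m:ℝ) + 1) ^ n := by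
    rw [← mul_pow]
    exact pow_le_pow_left₀ (cc_pos m).le (by simpa using cc_le m) n
  have h2 : Real.exp (-(cc m * ε)) ≤ Real.exp (-(Real.pi / 2 * ε)) * ρ ^ m := by
    rw [hρ, ← Real.exp_nat_mul, ← Real.exp_add]
    exact le_of_eq (congrArg Real.exp (by unfold cc; push_cast; ring))
  calc cc m ^ n * Real.exp (-(cc m * ε))
      ≤ (Real.pi ^ n * ((m:ℝ) + 1) ^ n) * (Real.exp (-(Real.pi / 2 * ε)) * ρ ^ m) := by
        apply mul_le_mul h1 h2 (Real.exp_pos _).le (by positivity)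
    _ = Real.pi ^ n * Real.exp (-(Real.pi / 2 * ε)) * (((m:ℝ) + 1) ^ n * ρ ^ m) := by ring

noncomputable def S (n : ℕ) (x : ℝ) : ℝ := ∑' m, Dg n m x

lemma summable_Dg (n : ℕ) {x : ℝ} (hx : x ∈ Set.Ioo 0 Real.pi) :
    Summable (fun m => Dg n m x) := by
  obtain ⟨hx0, hxπ⟩ := hx
  apply Summable.of_norm_bounded (((summable_bound n (half_pos hx0)).mul_left
    (8 / (1 - Real.exp (-Real.pi ^ 2)))))
  intro m
  exact Dg_bound n m (half_pos hx0) (by linarith [Real.pi_pos]) (by linarith) hxπ.le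

lemma hasDerivAt_S (n : ℕ) {x : ℝ} (hx : x ∈ Set.Ioo 0 Real.pi) :
    HasDerivAt (S n) (S (n + 1) x) x := by
  obtain ⟨hx0, hxπ⟩ := hx
  have hmem : x ∈ Set.Ioo (x / 2) Real.pi := ⟨by linarith, hxπ⟩
  apply hasDerivAt_tsum_of_isPreconnected
    ((summable_bound (n+1) (half_pos hx0)).mul_left (8 / (1 - Real.exp (-Real.pi ^ 2))))
    isOpen_Ioo (convex_Ioo _ _).isPreconnected
    (fun m y _ => hasDerivAt_Dg n m y) (fun m y hy => ?_) hmem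
    (summable_Dg n ⟨hx0, hxπ⟩) hmem
  exact Dg_bound (n+1) m (half_pos hx0) (by linarith [Real.pi_pos]) hy.1.le hy.2.le


lemma coth_ratio {t : ℝ} (ht : 0 < t) :
    Real.cosh t / Real.sinh t = (1 + Real.exp (-(2*t))) / (1 - Real.exp (-(2*t))) := by
  rw [Real.cosh_eq, Real.sinh_eq]
  have he : Real.exp (-t) = Real.exp t * Real.exp (-(2*t)) := by
    rw [← Real.exp_add]; ring_nf
  have h1 : Real.exp t ≠ 0 := (Real.exp_pos t).ne'
  have h2 : (1:ℝ) - Real.exp (-(2*t)) ≠ 0 := by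
    have : Real.exp (-(2*t)) < 1 := Real.exp_lt_one_iff.2 (by linarith)
    linarith
  have h3 : Real.sinh t ≠ 0 := by
    rw [Real.sinh_eq, he]
    intro hcon
    apply h2
    field_simp at hcon
    nlinarith [Real.exp_pos t]
  rw [Real.sinh_eq] at h3
  have h4 : Real.exp t - Real.exp t * Real.exp (-(2*t)) ≠ 0 := by
    have := mul_ne_zero h1 h2
    simpa [mul_sub] using this
  rw [he, div_eq_div_iff (div_ne_zero h4 two_ne_zero) h2]
  ring

lemma K_hasSum {y : ℝ} (hy : y ≠ 0) :
    HasSum (fun m : ℕ => 4 / (2 * (m:ℝ) + 1) * Real.exp (-(cc m * |y|))) (K y) := by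
  have hy0 : 0 < |y| := abs_pos.2 hy
  have ht : 0 < Real.pi * |y| / 4 := by have := Real.pi_pos; positivity
  set r := Real.exp (-(2 * (Real.pi * |y| / 4))) with hrdef
  have hr0 : 0 < r := Real.exp_pos _
  have hr1 : r < 1 := Real.exp_lt_one_iff.2 (by linarith)
  have habs : |r| < 1 := by rwa [abs_of_pos hr0]
  have hK : K y = 2 * (Real.log (1 + r) - Real.log (1 - r)) := by
    rw [K, if_neg hy, coth_ratio ht, Real.log_div (by linarith) (by linarith)]
  rw [hK]
  have h := (hasSum_log_sub_log_of_abs_lt_one habs).mul_left 2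
  have hfe : (fun m : ℕ => 4 / (2 * (m:ℝ) + 1) * Real.exp (-(cc m * |y|)))
      = fun i : ℕ => 2 * (2 * (1 / (2 * (i:ℝ) + 1)) * r ^ (2 * i + 1)) := by
    funext m
    have hpow : r ^ (2 * m + 1) = Real.exp (-(cc m * |y|)) := by
      rw [hrdef, ← Real.exp_nat_mul]
      congr 1
      push_cast [cc]
      ring
    rw [hpow]
    have hm : (2 * (m:ℝ) + 1) ≠ 0 := by positivity
    field_simp
    ring
  rw [hfe]
  exact h

lemma aux_field {A P : ℝ} (hA : 0 < A) (hP : 1 < P) :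
    A⁻¹ * (1 - P⁻¹ * P⁻¹)⁻¹ + A * P⁻¹ * P⁻¹ * (1 - P⁻¹ * P⁻¹)⁻¹
      = (P * A⁻¹ + A * P⁻¹) / 2 / ((P - P⁻¹) / 2) := by
  have h1 : P ≠ 0 := by linarith
  have h2 : A ≠ 0 := hA.ne'
  have h3 : P * P - 1 ≠ 0 := by nlinarith
  field_simp

lemma exp_abs_hasSum {c x : ℝ} (hc : 0 < c) (hx0 : 0 < x) (hx2 : x < 2 * Real.pi) :
    HasSum (fun k : ℤ => Real.exp (-(c * |x + 2 * Real.pi * k|)))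
      (Real.cosh (c * (Real.pi - x)) / Real.sinh (c * Real.pi)) := by
  have hπ := Real.pi_pos
  set q := Real.exp (-(2 * Real.pi * c)) with hq
  have hq0 : 0 < q := Real.exp_pos _
  have hq1 : q < 1 := Real.exp_lt_one_iff.2 (by nlinarith)
  set f : ℤ → ℝ := fun k => Real.exp (-(c * |x + 2 * Real.pi * k|)) with hf
  have h1 : HasSum (fun n : ℕ => f n)
      (Real.exp (-(c * x)) * (1 - q)⁻¹) := by
    have h := (hasSum_geometric_of_lt_one hq0.le hq1).mul_left (Real.exp (-(c * x)))
    have hfe : (fun n : ℕ => f n)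
        = fun n : ℕ => Real.exp (-(c * x)) * q ^ n := by
      funext n
      simp only [hf]
      have habs : |x + 2 * Real.pi * ((n : ℤ) : ℝ)| = x + 2 * Real.pi * n := by
        rw [abs_of_nonneg]
        · push_cast; ring
        · push_cast
          have : (0:ℝ) ≤ (n:ℝ) := Nat.cast_nonneg n
          nlinarith
      rw [habs, hq, ← Real.exp_nat_mul, ← Real.exp_add]
      congr 1
      push_cast
      ring
    rw [hfe]; exact h
  have h2 : HasSum (fun n : ℕ => f (-((n:ℤ) + 1)))
      (Real.exp (-(c * (2 * Real.pi - x))) * (1 - q)⁻¹) := by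
    have h := (hasSum_geometric_of_lt_one hq0.le hq1).mul_left
      (Real.exp (-(c * (2 * Real.pi - x))))
    have hfe : (fun n : ℕ => f (-((n:ℤ) + 1)))
        = fun n : ℕ => Real.exp (-(c * (2 * Real.pi - x))) * q ^ n := by
      funext n
      simp only [hf]
      have habs : |x + 2 * Real.pi * (((-((n:ℤ) + 1)) : ℤ) : ℝ)|
          = (2 * Real.pi - x) + 2 * Real.pi * n := by
        rw [abs_of_nonpos]
        · push_cast; ring
        · push_cast
          have : (0:ℝ) ≤ (n:ℝ) := Nat.cast_nonneg n
          nlinarith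
      rw [habs, hq, ← Real.exp_nat_mul, ← Real.exp_add]
      congr 1
      push_cast
      ring
    rw [hfe]; exact h
  have total := h1.of_nat_of_neg_add_one h2
  have heq : Real.exp (-(c * x)) * (1 - q)⁻¹ + Real.exp (-(c * (2 * Real.pi - x))) * (1 - q)⁻¹
      = Real.cosh (c * (Real.pi - x)) / Real.sinh (c * Real.pi) := by
    have hP : Real.exp (c * Real.pi) ≠ 0 := (Real.exp_pos _).ne'
    have hA : Real.exp (c * x) ≠ 0 := (Real.exp_pos _).ne'
    have hq' : (1:ℝ) - q ≠ 0 := by linarith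
    have hsinh : Real.sinh (c * Real.pi) ≠ 0 :=
      (Real.sinh_pos_iff.2 (by positivity)).ne'
    rw [Real.cosh_eq, Real.sinh_eq]
    have e1 : Real.exp (-(c * x)) = (Real.exp (c * x))⁻¹ := by rw [Real.exp_neg]
    have e2 : Real.exp (-(c * (2 * Real.pi - x)))
        = Real.exp (c * x) * (Real.exp (c * Real.pi))⁻¹ * (Real.exp (c * Real.pi))⁻¹ := by
      rw [← Real.exp_neg, ← Real.exp_add, ← Real.exp_add]; congr 1; ring
    have e3 : q = (Real.exp (c * Real.pi))⁻¹ * (Real.exp (c * Real.pi))⁻¹ := by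
      rw [hq, ← Real.exp_neg, ← Real.exp_add]; congr 1; ring
    have e4 : Real.exp (c * (Real.pi - x))
        = Real.exp (c * Real.pi) * (Real.exp (c * x))⁻¹ := by
      rw [← Real.exp_neg, ← Real.exp_add]; congr 1; ring
    have e5 : Real.exp (-(c * (Real.pi - x)))
        = Real.exp (c * x) * (Real.exp (c * Real.pi))⁻¹ := by
      rw [← Real.exp_neg, ← Real.exp_add]; congr 1; ring
    have e6 : Real.exp (-(c * Real.pi)) = (Real.exp (c * Real.pi))⁻¹ := by rw [Real.exp_neg]
    have hP1 : 1 < Real.exp (c * Real.pi) := by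
      rw [← Real.exp_zero]
      exact Real.exp_lt_exp.2 (by positivity)
    have haux := aux_field (Real.exp_pos (c * x)) hP1
    rw [e4, e5, e6, e1, e2, e3]
    linear_combination haux
  rw [← heq]
  exact total

lemma K_nonneg (y : ℝ) : 0 ≤ K y := by
  rcases eq_or_ne y 0 with h | h
  · simp [K, h]
  · exact (K_hasSum h).nonneg fun m => by positivity

lemma Kp_eq_S0 {x : ℝ} (hx : x ∈ Set.Ioo 0 Real.pi) : Kp x = S 0 x := by
  obtain ⟨hx0, hxπ⟩ := hx
  have hπ := Real.pi_pos
  have hx2 : x < 2 * Real.pi := by linarith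
  set F : ℤ → ℕ → ℝ := fun k m => 4 / (2 * (m:ℝ) + 1) *
    Real.exp (-(cc m * |x + 2 * Real.pi * k|)) with hF
  have hne : ∀ k : ℤ, x + 2 * Real.pi * k ≠ 0 := by
    intro k
    rcases le_or_gt 0 k with hk | hk
    · have : (0:ℝ) ≤ k := Int.cast_nonneg hk
      nlinarith
    · have : (k:ℝ) + 1 ≤ 0 := by exact_mod_cast Int.lt_iff_add_one_le.1 hk
      nlinarith
  have habs_ge : ∀ k : ℤ, x ≤ |x + 2 * Real.pi * k| := by
    intro k
    rcases le_or_gt 0 k with hk | hk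
    · have : (0:ℝ) ≤ k := Int.cast_nonneg hk
      rw [abs_of_pos (by nlinarith)]
      nlinarith
    · have : (k:ℝ) + 1 ≤ 0 := by exact_mod_cast Int.lt_iff_add_one_le.1 hk
      rw [abs_of_neg (by nlinarith)]
      nlinarith
  have hFk : ∀ k : ℤ, HasSum (fun m => F k m) (K (x + 2 * Real.pi * k)) :=
    fun k => K_hasSum (hne k)
  have hFm : ∀ m : ℕ, HasSum (fun k : ℤ => F k m) (Dg 0 m x) := by
    intro m
    have h := (exp_abs_hasSum (cc_pos m) hx0 hx2).mul_left (4 / (2 * (m:ℝ) + 1))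
    convert h using 1
    rfl
    simp only [Dg, pow_zero, one_mul, if_pos (show Even 0 from ⟨0, rfl⟩)]
    ring
  have hF0 : ∀ k m, 0 ≤ F k m := fun k m => by positivity
  set ρ := Real.exp (-(Real.pi * x)) with hρ
  have hρ1 : ρ < 1 := Real.exp_lt_one_iff.2 (by nlinarith)
  have hρ0 : 0 < ρ := Real.exp_pos _
  have hKle : ∀ k : ℤ, K (x + 2 * Real.pi * k)
      ≤ 4 * Real.exp (-(cc 0 * |x + 2 * Real.pi * k|)) * (1 - ρ)⁻¹ := by
    intro k
    set y := x + 2 * Real.pi * (k:ℝ) with hy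
    have hyne := hne k
    have hge := habs_ge k
    have hgeo := (hasSum_geometric_of_lt_one hρ0.le hρ1).mul_left
      (4 * Real.exp (-(cc 0 * |y|)))
    refine hasSum_le (fun m => ?_) (K_hasSum hyne) hgeo
    have he : Real.exp (-(cc m * |y|))
        = Real.exp (-(cc 0 * |y|)) * Real.exp (-(Real.pi * |y|)) ^ m := by
      rw [← Real.exp_nat_mul, ← Real.exp_add]
      congr 1
      unfold cc
      push_cast
      ring
    have hρ' : Real.exp (-(Real.pi * |y|)) ≤ ρ := Real.exp_le_exp.2 (by nlinarith)
    have h4 : 4 / (2 * (m:ℝ) + 1) ≤ 4 := by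
      rw [div_le_iff₀ (by positivity)]
      nlinarith [Nat.cast_nonneg (α := ℝ) m]
    calc 4 / (2 * (m:ℝ) + 1) * Real.exp (-(cc m * |y|))
        ≤ 4 * (Real.exp (-(cc 0 * |y|)) * ρ ^ m) := by
          rw [he]
          apply mul_le_mul h4 ?_ (by positivity) (by norm_num)
          gcongr
      _ = 4 * Real.exp (-(cc 0 * |y|)) * ρ ^ m := by ring
  have hKsummable : Summable (fun k : ℤ => K (x + 2 * Real.pi * k)) := by
    apply Summable.of_nonneg_of_le (fun k => K_nonneg _) hKle
    exact ((exp_abs_hasSum (cc_pos 0) hx0 hx2).summable.mul_left 4).mul_right _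
  have hG : Summable (Function.uncurry F) := by
    refine (summable_prod_of_nonneg fun p => hF0 p.1 p.2).2 ⟨fun k => (hFk k).summable, ?_⟩
    apply hKsummable.congr
    intro k
    exact ((hFk k).tsum_eq).symm
  calc Kp x = ∑' k : ℤ, ∑' m : ℕ, F k m := tsum_congr fun k => ((hFk k).tsum_eq).symm
    _ = ∑' m : ℕ, ∑' k : ℤ, F k m :=
        (hG.tsum_comm' (fun k => (hFk k).summable) (fun m => (hFm m).summable)).symm
    _ = ∑' m : ℕ, Dg 0 m x := tsum_congr fun m => (hFm m).tsum_eq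
    _ = S 0 x := rfl

lemma key : ∀ n : ℕ, ∀ x ∈ Set.Ioo (0:ℝ) Real.pi, iteratedDeriv n Kp x = S n x := by
  intro n
  induction n with
  | zero => intro x hx; simpa [iteratedDeriv_zero] using Kp_eq_S0 hx
  | succ n ih =>
    intro x hx
    rw [iteratedDeriv_succ]
    have hev : iteratedDeriv n Kp =ᶠ[nhds x] S n := by
      filter_upwards [isOpen_Ioo.mem_nhds hx] with y hy using ih y hy
    rw [hev.deriv_eq]
    exact (hasDerivAt_S n hx).deriv

lemma Dg_sign (n m : ℕ) {x : ℝ} (hx : x ∈ Set.Ioo (0:ℝ) Real.pi) :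
    0 ≤ (-1 : ℝ) ^ n * Dg n m x := by
  obtain ⟨hx0, hxπ⟩ := hx
  have hc := cc_pos m
  have hs := sinh_cc_pos m
  have hm : (0:ℝ) < 2 * (m:ℝ) + 1 := by positivity
  have hpow : (-1 : ℝ) ^ n * (-cc m) ^ n = cc m ^ n := by
    rw [← mul_pow]; congr 1; ring
  have heq : (-1 : ℝ) ^ n * Dg n m x = 4 / (2 * (m : ℝ) + 1) / Real.sinh (cc m * Real.pi) *
      (cc m ^ n * (if Even n then Real.cosh (cc m * (Real.pi - x))
        else Real.sinh (cc m * (Real.pi - x)))) := by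
    rw [Dg, ← hpow]; ring
  rw [heq]
  have hite : 0 ≤ (if Even n then Real.cosh (cc m * (Real.pi - x))
      else Real.sinh (cc m * (Real.pi - x))) := by
    split_ifs
    · exact (Real.cosh_pos _).le
    · exact Real.sinh_nonneg_iff.2 (by nlinarith)
  positivity

lemma sign_S (n : ℕ) {x : ℝ} (hx : x ∈ Set.Ioo (0:ℝ) Real.pi) :
    0 ≤ (-1 : ℝ) ^ n * S n x := by
  rw [S, ← tsum_mul_left]
  exact tsum_nonneg fun m => Dg_sign n m hx

noncomputable def gC (m : ℕ) (z : ℂ) : ℂ :=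
  ((4 / (2 * (m : ℝ) + 1) / Real.sinh (cc m * Real.pi) : ℝ) : ℂ) *
    Complex.cosh (((cc m : ℝ) : ℂ) * ((Real.pi : ℂ) - z))

lemma gC_real (m : ℕ) (y : ℝ) : gC m (y : ℂ) = ((Dg 0 m y : ℝ) : ℂ) := by
  have harg : ((cc m : ℝ) : ℂ) * ((Real.pi : ℂ) - (y : ℂ)) = ((cc m * (Real.pi - y) : ℝ) : ℂ) := by
    push_cast; ring
  rw [gC, harg, ← Complex.ofReal_cosh, ← Complex.ofReal_mul]
  congr 1
  simp [Dg]

lemma gC_diff (m : ℕ) : Differentiable ℂ (gC m) := by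
  apply Differentiable.const_mul
  apply Complex.differentiable_cosh.comp
  apply Differentiable.const_mul
  exact (differentiable_const _).sub differentiable_id

lemma norm_cosh_le (u : ℂ) : ‖Complex.cosh u‖ ≤ Real.cosh u.re := by
  rw [Complex.cosh, Real.cosh_eq]
  calc ‖(Complex.exp u + Complex.exp (-u)) / 2‖
      = ‖Complex.exp u + Complex.exp (-u)‖ / 2 := by
        rw [norm_div]; norm_num
    _ ≤ (‖Complex.exp u‖ + ‖Complex.exp (-u)‖) / 2 := by
        gcongr; exact norm_add_le _ _
    _ = (Real.exp u.re + Real.exp (-u.re)) / 2 := by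
        rw [Complex.norm_exp, Complex.norm_exp,
          Complex.neg_re]

lemma gC_bound (m : ℕ) {ε : ℝ} (hε : 0 < ε) (hεπ : ε ≤ Real.pi) {w : ℂ}
    (hw1 : ε ≤ w.re) (hw2 : w.re ≤ 2 * Real.pi - ε) :
    ‖gC m w‖ ≤ 8 / (1 - Real.exp (-Real.pi ^ 2)) * (cc m ^ 0 * Real.exp (-(cc m * ε))) := by
  have hc := cc_pos m
  have hs := sinh_cc_pos m
  have h2m : (1:ℝ) ≤ 2 * (m:ℝ) + 1 := by have := Nat.cast_nonneg (α := ℝ) m; linarith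
  have hq1 : Real.exp (-Real.pi ^ 2) < 1 :=
    Real.exp_lt_one_iff.2 (by nlinarith [Real.pi_pos])
  have hq0 : (0:ℝ) < 1 - Real.exp (-Real.pi ^ 2) := by linarith
  have hCpos : (0:ℝ) < 4 / (2 * (m:ℝ) + 1) / Real.sinh (cc m * Real.pi) := by positivity
  have hre : (((cc m : ℝ) : ℂ) * ((Real.pi : ℂ) - w)).re = cc m * (Real.pi - w.re) := by
    simp [Complex.mul_re, Complex.sub_re, Complex.sub_im, Complex.ofReal_re, Complex.ofReal_im]
  have hnorm : ‖gC m w‖ ≤ 4 / (2 * (m:ℝ) + 1) / Real.sinh (cc m * Real.pi) *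
      Real.cosh (cc m * (Real.pi - w.re)) := by
    rw [gC, norm_mul, Complex.norm_real, Real.norm_eq_abs, abs_of_pos hCpos]
    gcongr
    rw [← hre]
    exact norm_cosh_le _
  have hch : Real.cosh (cc m * (Real.pi - w.re)) ≤ Real.exp (cc m * (Real.pi - ε)) := by
    have h1 : Real.cosh (cc m * (Real.pi - w.re)) ≤ Real.cosh (cc m * (Real.pi - ε)) := by
      apply Real.cosh_le_cosh.2
      rw [abs_mul, abs_mul, abs_of_pos hc, abs_of_nonneg (show (0:ℝ) ≤ Real.pi - ε by linarith)]
      have habs : |Real.pi - w.re| ≤ Real.pi - ε := by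
        rw [abs_le]; constructor <;> nlinarith
      nlinarith
    refine h1.trans ?_
    rw [Real.cosh_eq]
    nlinarith [Real.exp_pos (-(cc m * (Real.pi - ε))), Real.exp_le_exp.2
      (show -(cc m * (Real.pi - ε)) ≤ cc m * (Real.pi - ε) by nlinarith)]
  calc ‖gC m w‖ ≤ 4 / (2 * (m:ℝ) + 1) / Real.sinh (cc m * Real.pi) *
        Real.cosh (cc m * (Real.pi - w.re)) := hnorm
    _ ≤ 4 / 1 / ((1 - Real.exp (-Real.pi ^ 2)) * Real.exp (cc m * Real.pi) / 2) *
        Real.exp (cc m * (Real.pi - ε)) := by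
      gcongr <;> first | positivity | exact sinh_lower m | exact h2m | exact hch
    _ = 8 / (1 - Real.exp (-Real.pi ^ 2)) * (cc m ^ 0 * Real.exp (-(cc m * ε))) := by
      have he : Real.exp (cc m * (Real.pi - ε)) =
          Real.exp (cc m * Real.pi) * Real.exp (-(cc m * ε)) := by
        rw [← Real.exp_add]; ring_nf
      rw [he, pow_zero]
      field_simp
      ring

lemma contDiffOn_Kp : ContDiffOn ℝ (⊤ : ℕ∞) Kp (Set.Ioo 0 Real.pi) := by
  have hπ := Real.pi_pos
  have hGR : AnalyticOnNhd ℝ (fun y : ℝ => (∑' m, gC m (y : ℂ)).re) (Set.Ioo 0 Real.pi) := by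
    intro x hx
    obtain ⟨hx0, hxπ⟩ := hx
    set U : Set ℂ := Complex.re ⁻¹' Set.Ioo (x / 2) (2 * Real.pi - x / 2) with hUdef
    have hU : IsOpen U := isOpen_Ioo.preimage Complex.continuous_re
    have hmem : (x : ℂ) ∈ U := by
      simp only [hUdef, Set.mem_preimage, Complex.ofReal_re, Set.mem_Ioo]
      constructor <;> nlinarith
    have hdiff : DifferentiableOn ℂ (fun z => ∑' m, gC m z) U := by
      apply Complex.differentiableOn_tsum_of_summable_norm
        ((summable_bound 0 (half_pos hx0)).mul_left (8 / (1 - Real.exp (-Real.pi ^ 2))))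
        (fun m => (gC_diff m).differentiableOn) hU
      intro m w hw
      simp only [hUdef, Set.mem_preimage, Set.mem_Ioo] at hw
      exact gC_bound m (half_pos hx0) (by linarith) hw.1.le (by linarith [hw.2])
    have hA : AnalyticAt ℂ (fun z => ∑' m, gC m z) (x : ℂ) :=
      (hdiff.analyticOnNhd hU) _ hmem
    have h1 : AnalyticAt ℝ (fun z => ∑' m, gC m z) (x : ℂ) := hA.restrictScalars
    have h2 : AnalyticAt ℝ (fun y : ℝ => (y : ℂ)) x := Complex.ofRealCLM.analyticAt x
    have h13 := h1.comp h2
    have h313 := (Complex.reCLM.analyticAt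
      (((fun z => ∑' m, gC m z) ∘ (fun y : ℝ => (y : ℂ))) x)).comp h13
    exact h313
  have hcd : ContDiffOn ℝ (⊤ : ℕ∞) (fun y : ℝ => (∑' m, gC m (y : ℂ)).re) (Set.Ioo 0 Real.pi) :=
    hGR.contDiffOn isOpen_Ioo.uniqueDiffOn
  apply hcd.congr
  intro y hy
  rw [Kp_eq_S0 hy]
  have hfe : (fun m : ℕ => gC m (y : ℂ)) = fun m : ℕ => ((Dg 0 m y : ℝ) : ℂ) :=
    funext fun m => gC_real m y
  rw [hfe, ← Complex.ofReal_tsum, Complex.ofReal_re]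
  rfl

theorem Kp_completely_monotone :
    ContDiffOn ℝ (⊤ : ℕ∞) Kp (Set.Ioo 0 Real.pi) ∧
    ∀ n : ℕ, ∀ x ∈ Set.Ioo (0 : ℝ) Real.pi,
      0 ≤ (-1 : ℝ) ^ n * iteratedDeriv n Kp x := by
  refine ⟨contDiffOn_Kp, ?_⟩
  intro n x hx
  rw [key n x hx]
  exact sign_S n hx
end
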